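/- Let β = b_1…b_k be a natural basic word of ω (tower decomposition with fin(b_i) > in(b_{i+1}) for all i). If for some i, in(b_i) ≤ in(b_{i+1}), then in(b_i) ≤ in(b_{i+1}) ≤ fin(b_{i+1}) < fin(b_i), and the word b_1…b_{i−1} b̃_{i+1} b_i b_{i+2}…b_k (where b̃_{i+1} raises each letter of b_{i+1} by 1) is a reduced word of ω obtained from β by a sequence of short and long braid relations. -/

import Mathlib

/-- The adjacent transposition `sᵢ = (i, i+1)` as a permutation of `ℕ`. -/
def sGen (i : ℕ) : Equiv.Perm ℕ := Equiv.swap i (i + 1)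

/-- The permutation represented by a word. -/
def toPerm (w : List ℕ) : Equiv.Perm ℕ := (w.map sGen).prod

/-- A word is reduced (of minimal length among words representing the same permutation). -/
def IsReducedWord (w : List ℕ) : Prop := ∀ v : List ℕ, toPerm v = toPerm w → w.length ≤ v.length

/-- `w` is a reduced word for the permutation `ω`. -/
def IsReducedWordOf (w : List ℕ) (ω : Equiv.Perm ℕ) : Prop :=
  toPerm w = ω ∧ ∀ v : List ℕ, toPerm v = ω → w.length ≤ v.length

/-- The relation `<₁`: `β` is obtained from `α` by swapping two adjacent letters
`x, y` with `y ≥ x + 2` (the smaller letter moves right). -/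
def Rel1 (α β : List ℕ) : Prop :=
  ∃ (p q : List ℕ) (x y : ℕ), x + 2 ≤ y ∧
    α = p ++ x :: y :: q ∧ β = p ++ y :: x :: q

/-- Lexicographic order (non-strict) on words. -/
def LexLe (α β : List ℕ) : Prop := α = β ∨ List.Lex (· < ·) α β

/-- A tower word: a nonempty increasing run of consecutive integers. -/
def IsTowerWord (a : List ℕ) : Prop := a ≠ [] ∧ a.Chain' (fun x y => y = x + 1)

/-- First letter of a tower word. -/
def inn (a : List ℕ) : ℕ := a.headI

/-- Last letter of a tower word. -/
def fin' (a : List ℕ) : ℕ := a.getLastD 0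

/-- `L` is the tower decomposition of `w`: a factorization into maximal tower words. -/
def IsTowerDecomp (w : List ℕ) (L : List (List ℕ)) : Prop :=
  L.flatten = w ∧ (∀ a ∈ L, IsTowerWord a) ∧
    L.Chain' (fun a b => inn b ≠ fin' a + 1)

/-- The relation `<₂`: a directed long-braid move of a tower word past its left neighbour. -/
def Rel2 (α β : List ℕ) : Prop :=
  ∃ (A B : List (List ℕ)) (a b b1 b2 : List ℕ),
    IsTowerDecomp α (A ++ a :: b :: B) ∧
    inn a ≤ inn b ∧ inn b < fin' b ∧ fin' b < fin' a ∧
    IsTowerWord b1 ∧ (b2 = [] ∨ IsTowerWord b2) ∧ b1 ++ b2 = b ∧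
    β = A.flatten ++ (b1.map (· + 1)) ++ a ++ b2 ++ B.flatten

/-- The directed-braid order: reflexive-transitive closure of `<₁ ∪ <₂`. -/
def DBraid : List ℕ → List ℕ → Prop :=
  Relation.ReflTransGen (fun α β => Rel1 α β ∨ Rel2 α β)

/-- The natural word of `ω`: the reduced word whose tower decomposition has
strictly decreasing initial letters. -/
def IsNaturalWordOf (η : List ℕ) (ω : Equiv.Perm ℕ) : Prop :=
  IsReducedWordOf η ω ∧ ∃ L, IsTowerDecomp η L ∧ L.Chain' (fun a b => inn b < inn a)

/-- A natural basic word of `ω`: a reduced word whose tower decomposition satisfies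
`fin(aᵢ) > in(aᵢ₊₁)` for all `i`. -/
def IsNaturalBasicOf (β : List ℕ) (ω : Equiv.Perm ℕ) : Prop :=
  IsReducedWordOf β ω ∧ ∃ L, IsTowerDecomp β L ∧ L.Chain' (fun a b => inn b < fin' a)

/-- One step of the track of a letter `b` through a tower word `a`. -/
def trackStep (a : List ℕ) (b : ℕ) : Option ℕ :=
  if inn a < b ∧ b ≤ fin' a then some (b - 1)
  else if b + 2 ≤ inn a ∨ fin' a + 2 ≤ b then some b
  else none

/-- The track sequence of `b` through a list of tower words. -/
def trackSeq : ℕ → List (List ℕ) → List ℕ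
  | b, [] => [b]
  | b, a :: rest =>
    match trackStep a b with
    | none => [b]
    | some b' => b :: trackSeq b' rest

/-- The tower decomposition of a word, as a function. -/
def towerDecomp : List ℕ → List (List ℕ)
  | [] => []
  | x :: xs =>
    match towerDecomp xs with
    | [] => [[x]]
    | t :: ts => if t.headI = x + 1 then (x :: t) :: ts else [x] :: t :: ts

/-!
Write `a = [p, …, p+n]` and `b = [q, …, q+m]`, with `p ≤ q < p+n` because the word is natural
basic. The tower satisfies `a sᵢ = sᵢ₊₁ a` for `p ≤ i < p+n` (a long braid
relation, pushed along the tower by short ones). If `b` reached up to `p+n`, moving its letters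
below `p+n` to the left of `a` would put `s_{p+n}` right after the last letter `s_{p+n}` of `a`,
and the two would cancel, contradicting reducedness. So `q+m < p+n`, and then `a b = b̃ a` with
`b̃` as long as `b`.
-/

@[simp]
theorem toPerm_nil : toPerm [] = 1 := rfl

@[simp]
theorem toPerm_cons (x : ℕ) (w : List ℕ) : toPerm (x :: w) = sGen x * toPerm w := by
  simp [toPerm]

@[simp]
theorem toPerm_append (u v : List ℕ) : toPerm (u ++ v) = toPerm u * toPerm v := by
  simp [toPerm]

theorem IsReducedWordOf.length_le_of_toPerm_eq {l u r v : List ℕ} {ω : Equiv.Perm ℕ}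
    (h : IsReducedWordOf (l ++ u ++ r) ω) (hv : toPerm v = toPerm u) :
    u.length ≤ v.length := by
  have := h.2 (l ++ v ++ r) (by rw [← h.1]; simp [hv])
  simpa using this

theorem IsReducedWordOf.replace {l u r v : List ℕ} {ω : Equiv.Perm ℕ}
    (h : IsReducedWordOf (l ++ u ++ r) ω) (hv : toPerm v = toPerm u)
    (hlen : v.length ≤ u.length) : IsReducedWordOf (l ++ v ++ r) ω := by
  refine ⟨by rw [← h.1]; simp [hv], fun w hw => ?_⟩
  have := h.2 w hw
  simp only [List.length_append] at this ⊢
  omega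

@[simp]
theorem inn_range'_succ (p n : ℕ) : inn (List.range' p (n + 1)) = p := by
  simp [inn, List.range'_succ]

@[simp]
theorem fin'_range'_succ (p n : ℕ) : fin' (List.range' p (n + 1)) = p + n := by
  simp [fin', List.range'_concat]

theorem map_add_one_range' (p n : ℕ) :
    (List.range' p n).map (· + 1) = List.range' (p + 1) n := by
  simpa [add_comm] using List.map_add_range' (a := 1) p n 1

theorem IsTowerWord.exists_eq_range' {a : List ℕ} (ha : IsTowerWord a) :
    ∃ p n, a = List.range' p (n + 1) := by
  obtain ⟨hne, hchain⟩ := ha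
  induction a with
  | nil => exact absurd rfl hne
  | cons x w ih =>
    cases w with
    | nil => exact ⟨x, 0, rfl⟩
    | cons y w =>
      obtain ⟨rfl, hchain⟩ := List.isChain_cons_cons.mp hchain
      obtain ⟨p, n, hw⟩ := ih (List.cons_ne_nil _ _) hchain
      have hp : p = x + 1 := by simpa [List.range'_succ] using (congrArg List.head? hw).symm
      exact ⟨x, n + 1, by rw [hw, hp, List.range'_succ (n := n + 1)]⟩

theorem toPerm_range'_apply (p n x : ℕ) :
    toPerm (List.range' p n) x =
      if p ≤ x ∧ x < p + n then x + 1 else if x = p + n then p else x := by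
  induction n generalizing p with
  | zero => simp only [List.range'_zero, toPerm_nil, Equiv.Perm.one_apply]; split_ifs <;> omega
  | succ n ih =>
    rw [List.range'_succ, toPerm_cons, Equiv.Perm.mul_apply, ih]
    simp only [sGen, Equiv.swap_apply_def]
    split_ifs <;> omega

theorem toPerm_range'_mul_sGen {p n i : ℕ} (hp : p ≤ i) (hi : i + 1 < p + n) :
    toPerm (List.range' p n) * sGen i = sGen (i + 1) * toPerm (List.range' p n) := by
  rw [sGen, Equiv.mul_swap_eq_swap_mul, toPerm_range'_apply, toPerm_range'_apply,
    if_pos ⟨hp, by omega⟩, if_pos ⟨by omega, hi⟩, sGen]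

theorem toPerm_range'_mul_toPerm {p n : ℕ} {w : List ℕ}
    (hw : ∀ i ∈ w, p ≤ i ∧ i + 1 < p + n) :
    toPerm (List.range' p n) * toPerm w = toPerm (w.map (· + 1)) * toPerm (List.range' p n) := by
  induction w with
  | nil => simp
  | cons x w ih =>
    obtain ⟨hx, hx'⟩ := hw x List.mem_cons_self
    rw [toPerm_cons, ← mul_assoc, toPerm_range'_mul_sGen hx hx', mul_assoc,
      ih fun i hi => hw i (List.mem_cons_of_mem x hi), List.map_cons, toPerm_cons, mul_assoc]

theorem toPerm_range'_succ_mul_sGen (p n : ℕ) :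
    toPerm (List.range' p (n + 1)) * sGen (p + n) = toPerm (List.range' p n) := by
  simp [List.range'_concat, mul_assoc, sGen]

theorem toPerm_range'_append_range'_of_overlap {p q n k j : ℕ} (hpq : p ≤ q)
    (hk : q + k = p + n) :
    toPerm (List.range' p (n + 1) ++ List.range' q (k + j + 1)) =
      toPerm (List.range' (q + 1) k ++ List.range' p n ++ List.range' (q + k + 1) j) := by
  have hsplit : List.range' q (k + j + 1) =
      List.range' q k ++ (p + n) :: List.range' (q + k + 1) j := by
    rw [← hk, ← List.range'_succ, List.range'_append_1]; ring_nf
  have hcomm : toPerm (List.range' p (n + 1)) * toPerm (List.range' q k) =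
      toPerm (List.range' (q + 1) k) * toPerm (List.range' p (n + 1)) := by
    rw [toPerm_range'_mul_toPerm fun i hi => by rw [List.mem_range'_1] at hi; omega,
      map_add_one_range']
  rw [hsplit, toPerm_append, toPerm_append, toPerm_cons, ← mul_assoc, hcomm, mul_assoc,
    ← mul_assoc (toPerm (List.range' p (n + 1))), toPerm_range'_succ_mul_sGen]
  simp

/-- one step of the insertion sort algorithm on a natural basic word. -/
theorem insertion_sort_step (ω : Equiv.Perm ℕ) (β : List ℕ)
    (hβ : IsReducedWordOf β ω)
    (A B : List (List ℕ)) (a b : List ℕ)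
    (hd : IsTowerDecomp β (A ++ a :: b :: B))
    (hnb : (A ++ a :: b :: B).Chain' (fun u v => inn v < fin' u))
    (h1 : inn a ≤ inn b) :
    (inn a ≤ inn b ∧ inn b ≤ fin' b ∧ fin' b < fin' a) ∧
    IsReducedWordOf (A.flatten ++ (b.map (· + 1)) ++ a ++ B.flatten) ω := by
  obtain ⟨hflat, htower, -⟩ := hd
  have hab : IsReducedWordOf (A.flatten ++ (a ++ b) ++ B.flatten) ω := by
    simpa [← hflat] using hβ
  have hba : inn b < fin' a :=
    (List.isChain_pair (R := fun u v => inn v < fin' u)).mp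
      (hnb.infix (l₁ := [a, b]) ⟨A, B, by simp⟩)
  obtain ⟨p, n, rfl⟩ := (htower a (by simp)).exists_eq_range'
  obtain ⟨q, m, rfl⟩ := (htower b (by simp)).exists_eq_range'
  simp only [inn_range'_succ, fin'_range'_succ] at h1 hba ⊢
  have hlt : q + m < p + n := by
    by_contra! hle
    obtain ⟨j, rfl⟩ : ∃ j, m = (p + n - q) + j := ⟨m - (p + n - q), by omega⟩
    have := hab.length_le_of_toPerm_eq
      (toPerm_range'_append_range'_of_overlap h1 (by omega : q + (p + n - q) = p + n)).symm
    simp only [List.length_append, List.length_range'] at this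
    omega
  refine ⟨⟨h1, by omega, hlt⟩, ?_⟩
  rw [List.append_assoc A.flatten]
  refine hab.replace ?_ (by simp [add_comm])
  rw [toPerm_append, toPerm_append, toPerm_range'_mul_toPerm fun i hi => ?_]
  rw [List.mem_range'_1] at hi
  omega
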